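/- Let g : (0,∞) → (0,∞) be locally Lipschitz and satisfy ω·g(x) < g(ω·x) for all x > 0 and ω ∈ (0,1). Let X_t(x₀) denote the solution of the ODE d/dt X_t = g(X_t) with X₀ = x₀. Then for every t > 0, every x > 0 and every ω ∈ (0,1), one has ω·X_t(x) < X_t(ω·x). -/
import Mathlib

open Set Filter Topology

theorem stmt_2 (g : ℝ → ℝ)
    (hg : ∀ x > (0:ℝ), ∃ s ∈ nhds x, ∃ L : NNReal, LipschitzOnWith L g s)
    (hgpos : ∀ x > (0:ℝ), 0 < g x)
    (hsub : ∀ x > (0:ℝ), ∀ ω ∈ Set.Ioo (0:ℝ) 1, ω * g x < g (ω * x))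
    (X : ℝ → ℝ → ℝ)
    (hX0 : ∀ x₀ > (0:ℝ), X 0 x₀ = x₀)
    (hXpos : ∀ x₀ > (0:ℝ), ∀ t ≥ (0:ℝ), 0 < X t x₀)
    (hXode : ∀ x₀ > (0:ℝ), ∀ t ≥ (0:ℝ), HasDerivAt (fun s => X s x₀) (g (X t x₀)) t) :
    ∀ t > (0:ℝ), ∀ x > (0:ℝ), ∀ ω ∈ Set.Ioo (0:ℝ) 1, ω * X t x < X t (ω * x) := by
  intro t ht x hx ω hω
  obtain ⟨hω0, hω1⟩ := hω
  have hωx : 0 < ω * x := mul_pos hω0 hx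
  set f : ℝ → ℝ := fun s => ω * X s x with hf
  set B : ℝ → ℝ := fun s => X s (ω * x) with hB
  -- non-strict comparison on [0, t]
  have key : ∀ ⦃s⦄, s ∈ Icc (0:ℝ) t → f s ≤ B s := by
    refine image_le_of_deriv_right_lt_deriv_boundary'
      (f' := fun s => ω * g (X s x)) (B' := fun s => g (X s (ω * x))) ?_ ?_ ?_ ?_ ?_ ?_
    · intro s hs
      exact (((hXode x hx s hs.1).const_mul ω).continuousAt.continuousWithinAt)
    · intro s hs
      exact ((hXode x hx s hs.1).const_mul ω).hasDerivWithinAt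
    · simp [hf, hB, hX0 x hx, hX0 _ hωx]
    · intro s hs
      exact (hXode _ hωx s hs.1).continuousAt.continuousWithinAt
    · intro s hs
      exact (hXode _ hωx s hs.1).hasDerivWithinAt
    · intro s hs hfB
      have h1 : ω * g (X s x) < g (ω * X s x) :=
        hsub _ (hXpos x hx s hs.1) ω ⟨hω0, hω1⟩
      have : ω * X s x = X s (ω * x) := hfB
      rwa [this] at h1
  -- strictness at t
  have hle : f t ≤ B t := key ⟨le_of_lt ht, le_refl t⟩
  rcases lt_or_eq_of_le hle with h | h
  · exact h
  · exfalso
    -- u := B - f has derivative d > 0 at t, but u ≥ 0 on [0,t] and u t = 0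
    set d : ℝ := g (X t (ω * x)) - ω * g (X t x) with hd
    have hdpos : 0 < d := by
      have h1 : ω * g (X t x) < g (ω * X t x) :=
        hsub _ (hXpos x hx t ht.le) ω ⟨hω0, hω1⟩
      have h2 : ω * X t x = X t (ω * x) := h
      rw [h2] at h1
      simpa [hd] using sub_pos.mpr h1
    have hu : HasDerivAt (fun s => B s - f s) d t :=
      (hXode _ hωx t ht.le).sub ((hXode x hx t ht.le).const_mul ω)
    have hslope := hasDerivAt_iff_tendsto_slope.mp hu
    have hslope' : Tendsto (slope (fun s => B s - f s) t) (𝓝[<] t) (𝓝 d) :=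
      hslope.mono_left (nhdsWithin_mono t (fun y hy => hy.ne))
    have hev : ∀ᶠ s in 𝓝[<] t, 0 < slope (fun s => B s - f s) t s :=
      hslope' (Ioi_mem_nhds hdpos)
    have hev2 : ∀ᶠ s in 𝓝[<] t, (0:ℝ) < s ∧ s < t := by
      filter_upwards [Ioo_mem_nhdsLT_of_mem (by constructor <;> simp [ht] : t ∈ Ioc (0:ℝ) t),
        self_mem_nhdsWithin] with s hs hs'
      exact ⟨hs.1, hs'⟩
    obtain ⟨s, hs1, hs2⟩ := (hev.and hev2).exists
    obtain ⟨hs0, hst⟩ := hs2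
    have husnn : 0 ≤ B s - f s := sub_nonneg.mpr (key ⟨hs0.le, hst.le⟩)
    have hut : B t - f t = 0 := by rw [h]; ring
    have : slope (fun s => B s - f s) t s ≤ 0 := by
      rw [slope_def_field]
      have hnum : (B s - f s) - (B t - f t) ≥ 0 := by rw [hut]; linarith
      have hden : s - t < 0 := sub_neg.mpr hst
      exact div_nonpos_of_nonneg_of_nonpos (by linarith) hden.le
    linarith
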